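/- A countable direct sum of chains D contains an increasing and unbounded (in size) sequence of components if and only if D ⊕ D_id is equimorphic with D, where D_id = ⊕_{n<ω} C^n is the direct sum of one chain of each finite size. -/

import Mathlib

open Cardinal

/-- Two preorders are equimorphic (siblings) if each order-embeds into the other. -/
def Equimorphic (α : Type*) (β : Type*) [Preorder α] [Preorder β] : Prop :=
  Nonempty (α ↪o β) ∧ Nonempty (β ↪o α)

/-- The setoid identifying order-isomorphic equimorphic substructures. -/
def sibSetoid (α : Type*) [Preorder α] : Setoid {S : Set α // Equimorphic S α} :=
  ⟨fun S T => Nonempty ((S : Set α) ≃o (T : Set α)),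
    ⟨fun _ => ⟨OrderIso.refl _⟩, fun ⟨e⟩ => ⟨e.symm⟩, fun ⟨e⟩ ⟨f⟩ => ⟨e.trans f⟩⟩⟩

/-- The sibling number of a structure: the number of isomorphism classes of
substructures equimorphic to it (every sibling is isomorphic to such a substructure). -/
noncomputable def sibNumber (α : Type*) [Preorder α] : Cardinal :=
  #(Quotient (sibSetoid α))


/-! If `g` is an increasing unbounded sequence of components, pass to a subsequence `g ∘ h` whose
`k`-th term has more than `k` elements. A Hilbert-hotel shift sends `g (h k)` to `g (h (2 * k))`,
into which it embeds, and frees the odd-indexed terms to receive the chains `C^(n+1)`; this embeds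
`D ⊕ D_id` into `D`.

Conversely, an embedding between direct sums of nonempty chains sends each component into a single
component, injectively. If the copy of some `C^(n+1)` lies in an infinite component `x`, then `x` is
not hit by the induced injection `σ` on the components of `D`, so the `σ`-orbit of `x` is an
increasing sequence of infinite components. Otherwise the components `w n` hosting the `C^(n+1)`
are finite with `|w n| > n`, and iterating `n ↦ |w n|` from `0` selects a subsequence of strictly
growing size. -/

open Cardinal Function

namespace Sigma

variable {ι : Type*} {α : ι → Type*}

theorem fst_eq_iff_le_or_le [∀ i, LinearOrder (α i)] {a b : Σ i, α i} :
    a.1 = b.1 ↔ a ≤ b ∨ b ≤ a := by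
  obtain ⟨i, x⟩ := a
  obtain ⟨j, y⟩ := b
  constructor
  · rintro (rfl : i = j)
    simpa only [mk_le_mk_iff] using le_total x y
  · rintro (h | h)
    exacts [(le_def.1 h).1, (le_def.1 h).1.symm]

theorem not_le_of_fst_ne [∀ i, LE (α i)] {a b : Σ i, α i} (h : a.1 ≠ b.1) : ¬a ≤ b :=
  fun hab => h (le_def.1 hab).1

end Sigma

namespace OrderEmbedding

def sumInl (X Y : Type*) [Preorder X] [Preorder Y] : X ↪o X ⊕ Y :=
  RelEmbedding.sumLiftRelInl _ _

def sumInr (X Y : Type*) [Preorder X] [Preorder Y] : Y ↪o X ⊕ Y :=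
  RelEmbedding.sumLiftRelInr _ _

variable {ι κ : Type*} {α : ι → Type*} {β : κ → Type*}

def sumElim {X Y Z : Type*} [Preorder X] [Preorder Y] [Preorder Z] (f : X ↪o Z) (g : Y ↪o Z)
    (hfg : ∀ x y, ¬f x ≤ g y) (hgf : ∀ x y, ¬g y ≤ f x) : X ⊕ Y ↪o Z where
  toFun := Sum.elim f g
  inj' := f.injective.sumElim g.injective fun x y h => hfg x y h.le
  map_rel_iff' := by
    rintro (x | y) (x' | y')
    · exact f.le_iff_le.trans Sum.inl_le_inl_iff.symm
    · exact iff_of_false (hfg x y') Sum.not_inl_le_inr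
    · exact iff_of_false (hgf x' y) Sum.not_inr_le_inl
    · exact g.le_iff_le.trans Sum.inr_le_inr_iff.symm

def sigmaMap [∀ i, PartialOrder (α i)] [∀ k, Preorder (β k)] (φ : ι → κ) (hφ : Injective φ)
    (e : ∀ i, α i ↪o β (φ i)) : (Σ i, α i) ↪o Σ k, β k :=
  ofMapLEIff (Sigma.map φ fun i => e i) <| by
    rintro ⟨i, x⟩ ⟨j, y⟩
    constructor
    · intro h
      obtain rfl : i = j := hφ (Sigma.le_def.1 h).1
      exact Sigma.mk_le_mk_iff.2 ((e i).le_iff_le.1 (Sigma.mk_le_mk_iff.1 h))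
    · rintro ⟨_, _, _, hxy⟩
      exact Sigma.mk_le_mk_iff.2 ((e _).monotone hxy)

section Components

variable [∀ i, LinearOrder (α i)] [∀ k, LinearOrder (β k)] (F : (Σ i, α i) ↪o Σ k, β k)

theorem fst_apply_eq_fst_apply_iff {a b : Σ i, α i} : (F a).1 = (F b).1 ↔ a.1 = b.1 := by
  simp only [Sigma.fst_eq_iff_le_or_le, F.le_iff_le]

variable [∀ i, Nonempty (α i)]

noncomputable def sigmaIndex (i : ι) : κ :=
  (F ⟨i, Classical.arbitrary _⟩).1

theorem fst_apply_mk (i : ι) (x : α i) : (F ⟨i, x⟩).1 = F.sigmaIndex i :=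
  (F.fst_apply_eq_fst_apply_iff).2 rfl

theorem sigmaIndex_injective : Injective F.sigmaIndex :=
  fun _ _ h => (F.fst_apply_eq_fst_apply_iff).1 h

noncomputable def sigmaFiber (i : ι) : α i ↪o β (F.sigmaIndex i) :=
  ofMapLEIff (fun x => F.fst_apply_mk i x ▸ (F ⟨i, x⟩).2) fun x y => by
    have eta : ∀ z : α i, (⟨F.sigmaIndex i, F.fst_apply_mk i z ▸ (F ⟨i, z⟩).2⟩ : Σ k, β k) =
        F ⟨i, z⟩ := fun z => by
      ext
      · exact (F.fst_apply_mk i z).symm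
      · simp
    rw [← Sigma.mk_le_mk_iff, eta, eta, F.le_iff_le, Sigma.mk_le_mk_iff]

end Components

end OrderEmbedding

theorem Sigma.nonempty_sum_orderEmbedding {ι κ μ : Type*} {α : ι → Type*} {β : κ → Type*}
    {γ : μ → Type*} [∀ i, PartialOrder (α i)] [∀ k, PartialOrder (β k)] [∀ m, Preorder (γ m)]
    (φ : ι → μ) (ψ : κ → μ) (hφψ : Injective (Sum.elim φ ψ))
    (e : ∀ i, Nonempty (α i ↪o γ (φ i))) (f : ∀ k, Nonempty (β k ↪o γ (ψ k))) :
    Nonempty ((Σ i, α i) ⊕ (Σ k, β k) ↪o Σ m, γ m) := by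
  have hne : ∀ i k, φ i ≠ ψ k := fun i k h => Sum.inl_ne_inr (hφψ h)
  exact ⟨.sumElim (.sigmaMap φ (hφψ.comp Sum.inl_injective) fun i => (e i).some)
    (.sigmaMap ψ (hφψ.comp Sum.inr_injective) fun k => (f k).some)
    (fun x y => Sigma.not_le_of_fst_ne (hne x.1 y.1))
    (fun x y => Sigma.not_le_of_fst_ne (hne x.1 y.1).symm)⟩

theorem nonempty_fin_orderEmbedding_of_le_mk {X : Type*} [LinearOrder X] {n : ℕ}
    (h : (n : Cardinal) ≤ #X) : Nonempty (Fin n ↪o X) :=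
  let ⟨s, hs⟩ := exists_finset_eq_card h
  ⟨s.orderEmbOfFin hs.symm⟩

theorem nonempty_orderEmbedding_of_natCard_le {X Y : Type*} [LinearOrder X] [LinearOrder Y]
    [Finite X] [Finite Y] (h : Nat.card X ≤ Nat.card Y) : Nonempty (X ↪o Y) := by
  have := Fintype.ofFinite X
  obtain ⟨e⟩ := nonempty_fin_orderEmbedding_of_le_mk (X := Y) (n := Nat.card X)
    (by rwa [← Nat.cast_card, Nat.cast_le])
  exact ⟨(monoEquivOfFin X Nat.card_eq_fintype_card.symm).symm.toOrderEmbedding.trans e⟩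

theorem injective_iterate_apply_of_notMem_range {X : Type*} {f : X → X} (hf : Injective f)
    {x : X} (hx : x ∉ Set.range f) : Injective fun n => f^[n] x := by
  refine Injective.of_lt_imp_ne fun m n hmn h => ?_
  obtain ⟨d, rfl⟩ := Nat.exists_eq_add_of_lt hmn
  rw [add_assoc, iterate_add_apply] at h
  exact hx ⟨f^[d] x, by rw [← iterate_succ_apply' f d x]; exact (hf.iterate m h).symm⟩

theorem injective_hilbertHotel {X : Type*} {f : ℕ → X} (hf : Injective f) :
    Injective (Sum.elim (extend f (fun k => f (2 * k)) id) fun n => f (2 * n + 1)) := by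
  refine Injective.sumElim ?_ (fun m n h => by have := hf h; omega) ?_
  · intro x y h
    by_cases hx : ∃ k, f k = x <;> by_cases hy : ∃ k, f k = y
    · obtain ⟨k, rfl⟩ := hx
      obtain ⟨l, rfl⟩ := hy
      rw [hf.extend_apply, hf.extend_apply] at h
      exact congrArg f (by have := hf h; omega)
    · obtain ⟨k, rfl⟩ := hx
      rw [hf.extend_apply, extend_apply' _ _ _ hy] at h
      exact absurd ⟨_, h⟩ hy
    · obtain ⟨l, rfl⟩ := hy
      rw [hf.extend_apply, extend_apply' _ _ _ hx] at h
      exact absurd ⟨_, h.symm⟩ hx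
    · rwa [extend_apply' _ _ _ hx, extend_apply' _ _ _ hy] at h
  · intro x n h
    by_cases hx : ∃ k, f k = x
    · obtain ⟨k, rfl⟩ := hx
      rw [hf.extend_apply] at h
      have := hf h
      omega
    · rw [extend_apply' _ _ _ hx] at h
      exact hx ⟨_, h.symm⟩

section DirectSumOfChains

variable {I : Type*} {C : I → Type*} [∀ i, LinearOrder (C i)]

theorem exists_increasing_unbounded_of_infinite (σ : I → I) (hσ : Injective σ)
    (e : ∀ i, C i ↪o C (σ i)) {x : I} (hx : x ∉ Set.range σ) [Infinite (C x)] :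
    ∃ g : ℕ → I, Injective g ∧ (∀ n, Nonempty (C (g n) ↪o C (g (n + 1)))) ∧
      ∀ M : ℕ, ∃ n, (M : Cardinal) < #(C (g n)) := by
  refine ⟨fun n => σ^[n] x, injective_iterate_apply_of_notMem_range hσ hx, fun n => ?_,
    fun M => ⟨0, natCast_lt_aleph0.trans_le (aleph0_le_mk (C x))⟩⟩
  show Nonempty (C (σ^[n] x) ↪o C (σ^[n + 1] x))
  rw [iterate_succ_apply']
  exact ⟨e _⟩

theorem exists_increasing_unbounded_of_finite (w : ℕ → I) (hw : Injective w)
    [∀ n, Finite (C (w n))] (e : ∀ n, Fin (n + 1) ↪o C (w n)) :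
    ∃ g : ℕ → I, Injective g ∧ (∀ n, Nonempty (C (g n) ↪o C (g (n + 1)))) ∧
      ∀ M : ℕ, ∃ n, (M : Cardinal) < #(C (g n)) := by
  set c : ℕ → ℕ := fun n => Nat.card (C (w n))
  have hc : ∀ n, n < c n := fun n => by
    simpa using Nat.card_le_card_of_injective (e n) (e n).injective
  set s : ℕ → ℕ := fun k => c^[k] 0
  have hs : StrictMono s := strictMono_nat_of_lt_succ fun k => by
    simpa only [s, iterate_succ_apply'] using hc (s k)
  have hcs : ∀ k, c (s k) = s (k + 1) := fun k => (iterate_succ_apply' c k 0).symm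
  refine ⟨fun k => w (s k), hw.comp hs.injective, fun k => ?_, fun M => ⟨M, ?_⟩⟩
  · refine nonempty_orderEmbedding_of_natCard_le ?_
    change c (s k) ≤ c (s (k + 1))
    rw [hcs]
    exact (hc _).le
  · rw [← Nat.cast_card, Nat.cast_lt]
    exact hs.le_apply.trans_lt (hc _)

theorem nonempty_orderEmbedding_sum_Did_of_increasing_unbounded (g : ℕ → I) (hg : Injective g)
    (hinc : ∀ n, Nonempty (C (g n) ↪o C (g (n + 1))))
    (hub : ∀ M : ℕ, ∃ n, (M : Cardinal) < #(C (g n))) :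
    Nonempty ((Σ i, C i) ⊕ (Σ n : ℕ, Fin (n + 1)) ↪o Σ i, C i) := by
  have hchain : ∀ m n, m ≤ n → Nonempty (C (g m) ↪o C (g n)) := fun m n hmn => by
    induction n, hmn using Nat.le_induction with
    | base => exact ⟨RelEmbedding.refl _⟩
    | succ n _ ih => exact ⟨ih.some.trans (hinc n).some⟩
  obtain ⟨h, hh, hbig⟩ : ∃ h : ℕ → ℕ, StrictMono h ∧ ∀ k : ℕ, (k : Cardinal) < #(C (g (h k))) := by
    refine Filter.extraction_forall_of_eventually (P := fun k m => (k : Cardinal) < #(C (g m)))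
      fun k => ?_
    obtain ⟨n, hn⟩ := hub k
    filter_upwards [Filter.eventually_ge_atTop n] with m hm
    exact hn.trans_le (mk_le_of_injective (hchain n m hm).some.injective)
  have hf : Injective (g ∘ h) := hg.comp hh.injective
  refine Sigma.nonempty_sum_orderEmbedding _ _ (injective_hilbertHotel hf) (fun i => ?_) fun n =>
    nonempty_fin_orderEmbedding_of_le_mk ((Nat.cast_le.2 (by omega)).trans (hbig _).le)
  by_cases hi : ∃ k, (g ∘ h) k = i
  · obtain ⟨k, rfl⟩ := hi
    rw [hf.extend_apply]
    exact hchain _ _ (hh.monotone (by omega))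
  · rw [extend_apply' _ _ _ hi]
    exact ⟨RelEmbedding.refl _⟩

theorem exists_increasing_unbounded_of_orderEmbedding_sum_Did [∀ i, Nonempty (C i)]
    (F : (Σ i, C i) ⊕ (Σ n : ℕ, Fin (n + 1)) ↪o Σ i, C i) :
    ∃ g : ℕ → I, Injective g ∧ (∀ n, Nonempty (C (g n) ↪o C (g (n + 1)))) ∧
      ∀ M : ℕ, ∃ n, (M : Cardinal) < #(C (g n)) := by
  set A : (Σ i, C i) ↪o Σ i, C i := (OrderEmbedding.sumInl _ _).trans F
  set B : (Σ n : ℕ, Fin (n + 1)) ↪o Σ i, C i := (OrderEmbedding.sumInr _ _).trans F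
  have hAB : ∀ i n, A.sigmaIndex i ≠ B.sigmaIndex n := fun i n h => by
    have := Sigma.fst_eq_iff_le_or_le.1
      ((A.fst_apply_mk i (Classical.arbitrary _)).trans (h.trans (B.fst_apply_mk n 0).symm))
    exact this.elim (fun h => Sum.not_inl_le_inr (F.le_iff_le.1 h))
      fun h => Sum.not_inr_le_inl (F.le_iff_le.1 h)
  by_cases hinf : ∃ n, Infinite (C (B.sigmaIndex n))
  · obtain ⟨n, _⟩ := hinf
    exact exists_increasing_unbounded_of_infinite A.sigmaIndex A.sigmaIndex_injective A.sigmaFiber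
      (x := B.sigmaIndex n) fun ⟨i, hi⟩ => hAB i n hi
  · have (n : ℕ) : Finite (C (B.sigmaIndex n)) := not_infinite_iff_finite.1 (not_exists.1 hinf n)
    exact exists_increasing_unbounded_of_finite B.sigmaIndex B.sigmaIndex_injective B.sigmaFiber

end DirectSumOfChains

theorem increasing_unbounded_iff_absorbs_Did_general (I : Type) (C : I → Type)
    [∀ i, LinearOrder (C i)] [∀ i, Nonempty (C i)] :
    (∃ g : ℕ → I, Function.Injective g ∧
        (∀ n, Nonempty (C (g n) ↪o C (g (n + 1)))) ∧
        ∀ M : ℕ, ∃ n, (M : Cardinal) < #(C (g n))) ↔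
      Equimorphic ((Σ i, C i) ⊕ (Σ n : ℕ, Fin (n + 1))) (Σ i, C i) := by
  constructor
  · rintro ⟨g, hg, hinc, hub⟩
    exact ⟨nonempty_orderEmbedding_sum_Did_of_increasing_unbounded g hg hinc hub,
      ⟨OrderEmbedding.sumInl _ _⟩⟩
  · rintro ⟨⟨F⟩, -⟩
    exact exists_increasing_unbounded_of_orderEmbedding_sum_Did F

theorem increasing_unbounded_iff_absorbs_Did (I : Type) (C : I → Type)
    [∀ i, LinearOrder (C i)] [∀ i, Nonempty (C i)]
    [Countable I] [∀ i, Countable (C i)] :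
    (∃ g : ℕ → I, Function.Injective g ∧
        (∀ n, Nonempty (C (g n) ↪o C (g (n + 1)))) ∧
        ∀ M : ℕ, ∃ n, (M : Cardinal) < #(C (g n))) ↔
      Equimorphic ((Σ i, C i) ⊕ (Σ n : ℕ, Fin (n + 1))) (Σ i, C i) :=
  increasing_unbounded_iff_absorbs_Did_general I C
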